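/- arXiv:1806.09795 — 4 statements merged into one kernel-verified Lean document; each statement's English description precedes it below -/
import Mathlib

section
/- In a two-player finite discounted stochastic game, an observed bi-policy π is a utilitarian cooperative strategy (uCS) — i.e., for every state s, π(s) maximizes Q_1^π(s,·) + Q_2^π(s,·) over all pure joint actions — if and only if (B_π − B_a) D_π (r_1 + r_2) ≥ 0 componentwise for every pure joint action a, where D_π = I + γ P (I − γ G_π)^{-1} B_π and B_a is the operator induced by the stationary bi-policy that plays the pure joint action a in every state. -/
open Matrix BigOperators

/-! The operator `D_π` sends a reward vector `r` to the action-value vector `Q^π` of `r`, so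
`(B_π − B_a) D_π (r_1 + r_2)` evaluated at `s` is the `π(s)`-average of `Q_1^π + Q_2^π` at `s`
minus its value at `(s, a)`; both conditions state that this difference is nonnegative. -/

section

variable {S A1 A2 : Type*} [Fintype A1] [Fintype A2]

/-- The paper's `B_π`. -/
def jointPolicyMatrix [DecidableEq S] (π1 : S → A1 → ℝ) (π2 : S → A2 → ℝ) :
    Matrix S (S × A1 × A2) ℝ :=
  Matrix.of fun s x => if x.1 = s then π1 s x.2.1 * π2 s x.2.2 else 0

/-- The paper's `B_a`. -/
def pureActionMatrix [DecidableEq S] [DecidableEq A1] [DecidableEq A2] (a : A1 × A2) :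
    Matrix S (S × A1 × A2) ℝ :=
  Matrix.of fun s x => if x = (s, a.1, a.2) then 1 else 0

variable [Fintype S] [DecidableEq S]

theorem jointPolicyMatrix_mulVec_apply (π1 : S → A1 → ℝ) (π2 : S → A2 → ℝ)
    (f : S × A1 × A2 → ℝ) (s : S) :
    (jointPolicyMatrix π1 π2 *ᵥ f) s = ∑ b1, ∑ b2, π1 s b1 * π2 s b2 * f (s, b1, b2) := by
  simp [jointPolicyMatrix, mulVec, dotProduct, Fintype.sum_prod_type, ite_mul]

theorem pureActionMatrix_mulVec_apply [DecidableEq A1] [DecidableEq A2] (a : A1 × A2)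
    (f : S × A1 × A2 → ℝ) (s : S) :
    (pureActionMatrix a *ᵥ f) s = f (s, a.1, a.2) := by
  simp [pureActionMatrix, mulVec, dotProduct, ite_mul]

end

theorem one_add_smul_mul_mulVec_apply {S X : Type*} [Fintype S] [Fintype X] [DecidableEq X]
    (γ : ℝ) (p : X → S → ℝ) (M : Matrix S S ℝ) (B : Matrix S X ℝ) (r : X → ℝ) (x : X) :
    ((1 + γ • (Matrix.of p * M * B)) *ᵥ r) x = r x + γ * ∑ s', p x s' * (M *ᵥ (B *ᵥ r)) s' := by
  rw [add_mulVec, one_mulVec, smul_mulVec, ← mulVec_mulVec, ← mulVec_mulVec]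
  rfl

theorem stmt3_general {S A1 A2 : Type*} [Fintype S] [Fintype A1] [Fintype A2]
    [DecidableEq S] [DecidableEq A1] [DecidableEq A2]
    (γ : ℝ)
    (p : S × A1 × A2 → S → ℝ)
    (π1 : S → A1 → ℝ) (π2 : S → A2 → ℝ)
    (r1 r2 : S × A1 × A2 → ℝ)
    (Gπ : Matrix S S ℝ)
    (Bπ : Matrix S (S × A1 × A2) ℝ)
    (hB : Bπ = Matrix.of fun s x => if x.1 = s then π1 s x.2.1 * π2 s x.2.2 else 0)
    (Ba : A1 × A2 → Matrix S (S × A1 × A2) ℝ)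
    (hBa : ∀ a, Ba a = Matrix.of fun s x => if x = (s, a.1, a.2) then 1 else 0)
    (P : Matrix (S × A1 × A2) S ℝ)
    (hP : P = Matrix.of fun sa s' => p sa s')
    (V1 V2 : S → ℝ)
    (hV1 : V1 = (1 - γ • Gπ)⁻¹ *ᵥ (Bπ *ᵥ r1))
    (hV2 : V2 = (1 - γ • Gπ)⁻¹ *ᵥ (Bπ *ᵥ r2))
    (Q1 Q2 : S × A1 × A2 → ℝ)
    (hQ1 : ∀ sa, Q1 sa = r1 sa + γ * ∑ s', p sa s' * V1 s')
    (hQ2 : ∀ sa, Q2 sa = r2 sa + γ * ∑ s', p sa s' * V2 s')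
    (Dπ : Matrix (S × A1 × A2) (S × A1 × A2) ℝ)
    (hD : Dπ = 1 + γ • (P * (1 - γ • Gπ)⁻¹ * Bπ)) :
    (∀ s : S, ∀ a : A1 × A2,
        Q1 (s, a.1, a.2) + Q2 (s, a.1, a.2) ≤
          ∑ b1, ∑ b2, π1 s b1 * π2 s b2 * (Q1 (s, b1, b2) + Q2 (s, b1, b2)))
      ↔
    (∀ a : A1 × A2, ∀ s : S,
        0 ≤ (((Bπ - Ba a) * Dπ) *ᵥ (fun sa => r1 sa + r2 sa)) s) := by
  have hDr : Dπ *ᵥ (fun sa => r1 sa + r2 sa) = fun sa => Q1 sa + Q2 sa := by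
    funext sa
    have hV : (1 - γ • Gπ)⁻¹ *ᵥ (Bπ *ᵥ (r1 + r2)) = V1 + V2 := by
      rw [hV1, hV2, mulVec_add, mulVec_add]
    rw [hD, hP, show (fun sa => r1 sa + r2 sa) = r1 + r2 from rfl,
      one_add_smul_mul_mulVec_apply, hV, hQ1, hQ2]
    simp only [Pi.add_apply, mul_add, Finset.sum_add_distrib]
    ring
  have hgap : ∀ a s, (((Bπ - Ba a) * Dπ) *ᵥ (fun sa => r1 sa + r2 sa)) s =
      ∑ b1, ∑ b2, π1 s b1 * π2 s b2 * (Q1 (s, b1, b2) + Q2 (s, b1, b2))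
        - (Q1 (s, a.1, a.2) + Q2 (s, a.1, a.2)) := by
    intro a s
    rw [← mulVec_mulVec, hDr, sub_mulVec, Pi.sub_apply, hB, hBa]
    exact congrArg₂ (· - ·) (jointPolicyMatrix_mulVec_apply π1 π2 _ s)
      (pureActionMatrix_mulVec_apply a _ s)
  simp only [hgap, sub_nonneg]
  exact forall_comm

/-- In a two-player finite discounted stochastic game, an
observed bi-policy `π` is a utilitarian cooperative strategy (uCS) — i.e., for
every state `s`, `π(s)` maximizes `Q_1^π(s,·) + Q_2^π(s,·)` over all pure joint
actions — if and only if `(B_π − B_a) D_π (r_1 + r_2) ≥ 0` componentwise for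
every pure joint action `a`, where `D_π = I + γ P (I − γ G_π)⁻¹ B_π` and `B_a`
corresponds to the stationary bi-policy playing `a` in every state. -/
theorem stmt3 {S A1 A2 : Type*} [Fintype S] [Fintype A1] [Fintype A2]
    [DecidableEq S] [DecidableEq A1] [DecidableEq A2]
    (γ : ℝ) (hγ0 : 0 ≤ γ) (hγ1 : γ < 1)
    (p : S × A1 × A2 → S → ℝ)
    (hp0 : ∀ sa s', 0 ≤ p sa s') (hp1 : ∀ sa, ∑ s', p sa s' = 1)
    (π1 : S → A1 → ℝ) (π2 : S → A2 → ℝ)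
    (hπ10 : ∀ s a, 0 ≤ π1 s a) (hπ11 : ∀ s, ∑ a, π1 s a = 1)
    (hπ20 : ∀ s a, 0 ≤ π2 s a) (hπ21 : ∀ s, ∑ a, π2 s a = 1)
    (r1 r2 : S × A1 × A2 → ℝ)
    (Gπ : Matrix S S ℝ)
    (hG : Gπ = Matrix.of fun s s' => ∑ a1, ∑ a2, π1 s a1 * π2 s a2 * p (s, a1, a2) s')
    (Bπ : Matrix S (S × A1 × A2) ℝ)
    (hB : Bπ = Matrix.of fun s x => if x.1 = s then π1 s x.2.1 * π2 s x.2.2 else 0)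
    (Ba : A1 × A2 → Matrix S (S × A1 × A2) ℝ)
    (hBa : ∀ a, Ba a = Matrix.of fun s x => if x = (s, a.1, a.2) then 1 else 0)
    (P : Matrix (S × A1 × A2) S ℝ)
    (hP : P = Matrix.of fun sa s' => p sa s')
    (V1 V2 : S → ℝ)
    (hV1 : V1 = (1 - γ • Gπ)⁻¹ *ᵥ (Bπ *ᵥ r1))
    (hV2 : V2 = (1 - γ • Gπ)⁻¹ *ᵥ (Bπ *ᵥ r2))
    (Q1 Q2 : S × A1 × A2 → ℝ)
    (hQ1 : ∀ sa, Q1 sa = r1 sa + γ * ∑ s', p sa s' * V1 s')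
    (hQ2 : ∀ sa, Q2 sa = r2 sa + γ * ∑ s', p sa s' * V2 s')
    (Dπ : Matrix (S × A1 × A2) (S × A1 × A2) ℝ)
    (hD : Dπ = 1 + γ • (P * (1 - γ • Gπ)⁻¹ * Bπ)) :
    (∀ s : S, ∀ a : A1 × A2,
        Q1 (s, a.1, a.2) + Q2 (s, a.1, a.2) ≤
          ∑ b1, ∑ b2, π1 s b1 * π2 s b2 * (Q1 (s, b1, b2) + Q2 (s, b1, b2)))
      ↔
    (∀ a : A1 × A2, ∀ s : S,
        0 ≤ (((Bπ - Ba a) * Dπ) *ᵥ (fun sa => r1 sa + r2 sa)) s) :=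
  stmt3_general γ p π1 π2 r1 r2 Gπ Bπ hB Ba hBa P hP V1 V2 hV1 hV2 Q1 Q2 hQ1 hQ2 Dπ hD
end

section
/- In a two-player finite discounted stochastic game, a bi-policy π is a Nash equilibrium (no player can improve their value by unilaterally deviating at any state to any pure action while the opponent keeps playing π) if and only if (B_{π|a_1} − B_π) D_π r_1 ≤ 0 for all actions a_1 of player 1 and (B_{π|a_2} − B_π) D_π r_2 ≤ 0 for all actions a_2 of player 2, where B_{π|a_i} is induced by the bi-policy in which player i plays the pure action a_i in every state and the other player plays their component of π. -/
/-!
Write `G = Bπ P` for the state-to-state transition matrix under `π`. It is row-stochastic, so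
`1 - γ G` is strictly diagonally dominant and invertible, and `V = (1 - γ G)⁻¹ Bπ r` is the unique
solution of `V = Bπ r + γ G V`. With `Q = r + γ P V` this gives `Dπ r = Q` and `Bπ Q = V`, hence
`(B' - Bπ) Dπ r = B' Q - V` for any `B'`. For the one-action deviations `B' = B_{π|a}` the row `s`
of `B' Q` is the expected `Q`-value of playing `a` in `s`, so both sides of the equivalence say the
same thing state by state.
-/

open Matrix

namespace Matrix

theorem isUnit_det_one_sub_smul_of_mem_rowStochastic {n : Type*} [Fintype n] [DecidableEq n]
    {γ : ℝ} (hγ0 : 0 ≤ γ) (hγ1 : γ < 1) {G : Matrix n n ℝ} (hG : G ∈ rowStochastic ℝ n) :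
    IsUnit (1 - γ • G).det := by
  refine isUnit_iff_ne_zero.2 (det_ne_zero_of_sum_row_lt_diag fun k => ?_)
  have hGkk : G k k ≤ 1 := le_one_of_mem_rowStochastic hG
  have hoff : ∑ j ∈ Finset.univ.erase k, ‖(1 - γ • G) k j‖ = γ * (1 - G k k) := by
    rw [← sum_row_of_mem_rowStochastic hG k, ← Finset.add_sum_erase _ _ (Finset.mem_univ k),
      add_sub_cancel_left, Finset.mul_sum]
    refine Finset.sum_congr rfl fun j hj => ?_
    rw [sub_apply, one_apply_ne (Finset.ne_of_mem_erase hj).symm, zero_sub, norm_neg, smul_apply,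
      smul_eq_mul, Real.norm_of_nonneg (mul_nonneg hγ0 (nonneg_of_mem_rowStochastic hG))]
  have hdiag : ‖(1 - γ • G) k k‖ = 1 - γ * G k k := by
    rw [sub_apply, one_apply_eq, smul_apply, smul_eq_mul, Real.norm_of_nonneg (by nlinarith)]
  rw [hoff, hdiag]
  nlinarith

theorem mul_mem_rowStochastic {R m n : Type*} [Semiring R] [PartialOrder R] [IsOrderedRing R]
    [Fintype m] [Fintype n] [DecidableEq n] {B : Matrix n m R} {P : Matrix m n R}
    (hB0 : ∀ i j, 0 ≤ B i j) (hB1 : B *ᵥ 1 = 1) (hP0 : ∀ i j, 0 ≤ P i j) (hP1 : P *ᵥ 1 = 1) :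
    B * P ∈ rowStochastic R n :=
  ⟨fun i j => Finset.sum_nonneg fun k _ => mul_nonneg (hB0 i k) (hP0 k j),
    by rw [← mulVec_mulVec, hP1, hB1]⟩

theorem sub_mul_mulVec_eq_sub_of_bellman {S X R : Type*} [Fintype S] [DecidableEq S]
    [Fintype X] [DecidableEq X] [CommRing R] {γ : R} {B : Matrix S X R} {P : Matrix X S R}
    (hB : IsUnit (1 - γ • (B * P)).det) (B' : Matrix S X R) {r q : X → R} {v : S → R}
    (hv : v = (1 - γ • (B * P))⁻¹ *ᵥ (B *ᵥ r)) (hq : q = r + γ • (P *ᵥ v)) :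
    ((B' - B) * (1 + γ • (P * (1 - γ • (B * P))⁻¹ * B))) *ᵥ r = B' *ᵥ q - v := by
  have hDr : (1 + γ • (P * (1 - γ • (B * P))⁻¹ * B)) *ᵥ r = q := by
    rw [hq, hv, add_mulVec, one_mulVec, smul_mulVec, ← mulVec_mulVec, ← mulVec_mulVec]
  have hBq : B *ᵥ q = v := by
    have hfix : (1 - γ • (B * P)) *ᵥ v = B *ᵥ r := by
      rw [hv, mulVec_mulVec, mul_nonsing_inv _ hB, one_mulVec]
    rw [hq, mulVec_add, mulVec_smul, mulVec_mulVec, ← hfix, sub_mulVec, one_mulVec,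
      smul_mulVec, sub_add_cancel]
  rw [← mulVec_mulVec, hDr, sub_mulVec, hBq]

end Matrix

theorem eq_add_smul_of_mulVec {X S : Type*} [Fintype S] {p : X → S → ℝ} {γ : ℝ}
    {r Q : X → ℝ} {V : S → ℝ} (hQ : ∀ x, Q x = r x + γ * ∑ s', p x s' * V s') :
    Q = r + γ • (of p *ᵥ V) := by
  funext x
  simp [hQ, mulVec, dotProduct]

section StochasticGame

variable {S A1 A2 : Type*} [Fintype S] [Fintype A1] [Fintype A2] [DecidableEq S]

theorem policy_mul_transition (π1 : S → A1 → ℝ) (π2 : S → A2 → ℝ) (p : S × A1 × A2 → S → ℝ) :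
    (of fun s x => if x.1 = s then π1 s x.2.1 * π2 s x.2.2 else 0 : Matrix S (S × A1 × A2) ℝ) *
      of p = of fun s s' => ∑ a1, ∑ a2, π1 s a1 * π2 s a2 * p (s, a1, a2) s' := by
  ext s s'
  simp [mul_apply, Fintype.sum_prod_type, ite_mul]

theorem stateTransition_mem_rowStochastic {p : S × A1 × A2 → S → ℝ}
    (hp0 : ∀ sa s', 0 ≤ p sa s') (hp1 : ∀ sa, ∑ s', p sa s' = 1)
    {π1 : S → A1 → ℝ} {π2 : S → A2 → ℝ}
    (hπ10 : ∀ s a, 0 ≤ π1 s a) (hπ11 : ∀ s, ∑ a, π1 s a = 1)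
    (hπ20 : ∀ s a, 0 ≤ π2 s a) (hπ21 : ∀ s, ∑ a, π2 s a = 1) :
    (of fun s s' => ∑ a1, ∑ a2, π1 s a1 * π2 s a2 * p (s, a1, a2) s') ∈ rowStochastic ℝ S := by
  rw [← policy_mul_transition]
  refine mul_mem_rowStochastic (fun s x => ?_) ?_ hp0 ?_
  · simp only [of_apply]
    split_ifs
    exacts [mul_nonneg (hπ10 _ _) (hπ20 _ _), le_rfl]
  · ext s
    simp [mulVec, dotProduct, Fintype.sum_prod_type, ← Finset.mul_sum, hπ11, hπ21]
  · ext sa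
    simp [mulVec, dotProduct, hp1]

theorem deviation_fst_mulVec_apply [DecidableEq A1] (π2 : S → A2 → ℝ) (a1 : A1)
    (Q : S × A1 × A2 → ℝ) (s : S) :
    ((of fun s x => if x.1 = s ∧ x.2.1 = a1 then π2 s x.2.2 else 0 :
      Matrix S (S × A1 × A2) ℝ) *ᵥ Q) s = ∑ a2, π2 s a2 * Q (s, a1, a2) := by
  simp [mulVec, dotProduct, Fintype.sum_prod_type, ite_and, ite_mul]

theorem deviation_snd_mulVec_apply [DecidableEq A2] (π1 : S → A1 → ℝ) (a2 : A2)
    (Q : S × A1 × A2 → ℝ) (s : S) :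
    ((of fun s x => if x.1 = s ∧ x.2.2 = a2 then π1 s x.2.1 else 0 :
      Matrix S (S × A1 × A2) ℝ) *ᵥ Q) s = ∑ a1, π1 s a1 * Q (s, a1, a2) := by
  simp [mulVec, dotProduct, Fintype.sum_prod_type, ite_and, ite_mul]

end StochasticGame

/-- In a two-player finite discounted stochastic game, a
bi-policy `π` is a Nash equilibrium (no player can improve their value by
unilaterally deviating at any state to any pure action while the opponent keeps
playing `π`, i.e. `[Q_2^π(s)]ᵀ π_1(s) ≤ V_2^π(s)·1` and
`Q_1^π(s) π_2(s) ≤ V_1^π(s)·1` in every state) if and only if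
`(B_{π|a_1} − B_π) D_π r_1 ≤ 0` for all `a_1 ∈ A_1` and
`(B_{π|a_2} − B_π) D_π r_2 ≤ 0` for all `a_2 ∈ A_2`. -/
theorem stmt4 {S A1 A2 : Type*} [Fintype S] [Fintype A1] [Fintype A2]
    [DecidableEq S] [DecidableEq A1] [DecidableEq A2]
    (γ : ℝ) (hγ0 : 0 ≤ γ) (hγ1 : γ < 1)
    (p : S × A1 × A2 → S → ℝ)
    (hp0 : ∀ sa s', 0 ≤ p sa s') (hp1 : ∀ sa, ∑ s', p sa s' = 1)
    (π1 : S → A1 → ℝ) (π2 : S → A2 → ℝ)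
    (hπ10 : ∀ s a, 0 ≤ π1 s a) (hπ11 : ∀ s, ∑ a, π1 s a = 1)
    (hπ20 : ∀ s a, 0 ≤ π2 s a) (hπ21 : ∀ s, ∑ a, π2 s a = 1)
    (r1 r2 : S × A1 × A2 → ℝ)
    (Gπ : Matrix S S ℝ)
    (hG : Gπ = Matrix.of fun s s' => ∑ a1, ∑ a2, π1 s a1 * π2 s a2 * p (s, a1, a2) s')
    (Bπ : Matrix S (S × A1 × A2) ℝ)
    (hB : Bπ = Matrix.of fun s x => if x.1 = s then π1 s x.2.1 * π2 s x.2.2 else 0)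
    (Bπa1 : A1 → Matrix S (S × A1 × A2) ℝ)
    (hBa1 : ∀ a1, Bπa1 a1 =
      Matrix.of fun s x => if x.1 = s ∧ x.2.1 = a1 then π2 s x.2.2 else 0)
    (Bπa2 : A2 → Matrix S (S × A1 × A2) ℝ)
    (hBa2 : ∀ a2, Bπa2 a2 =
      Matrix.of fun s x => if x.1 = s ∧ x.2.2 = a2 then π1 s x.2.1 else 0)
    (P : Matrix (S × A1 × A2) S ℝ)
    (hP : P = Matrix.of fun sa s' => p sa s')
    (V1 V2 : S → ℝ)
    (hV1 : V1 = (1 - γ • Gπ)⁻¹ *ᵥ (Bπ *ᵥ r1))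
    (hV2 : V2 = (1 - γ • Gπ)⁻¹ *ᵥ (Bπ *ᵥ r2))
    (Q1 Q2 : S × A1 × A2 → ℝ)
    (hQ1 : ∀ sa, Q1 sa = r1 sa + γ * ∑ s', p sa s' * V1 s')
    (hQ2 : ∀ sa, Q2 sa = r2 sa + γ * ∑ s', p sa s' * V2 s')
    (Dπ : Matrix (S × A1 × A2) (S × A1 × A2) ℝ)
    (hD : Dπ = 1 + γ • (P * (1 - γ • Gπ)⁻¹ * Bπ)) :
    ((∀ s : S, ∀ a2 : A2, ∑ a1, π1 s a1 * Q2 (s, a1, a2) ≤ V2 s) ∧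
     (∀ s : S, ∀ a1 : A1, ∑ a2, π2 s a2 * Q1 (s, a1, a2) ≤ V1 s))
      ↔
    ((∀ a1 : A1, ∀ s : S, (((Bπa1 a1 - Bπ) * Dπ) *ᵥ r1) s ≤ 0) ∧
     (∀ a2 : A2, ∀ s : S, (((Bπa2 a2 - Bπ) * Dπ) *ᵥ r2) s ≤ 0)) := by
  have hBP : Bπ * P = Gπ := by rw [hB, hP, hG, policy_mul_transition]
  have hdet : IsUnit (1 - γ • (Bπ * P)).det := hBP ▸ hG ▸
    isUnit_det_one_sub_smul_of_mem_rowStochastic hγ0 hγ1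
      (stateTransition_mem_rowStochastic hp0 hp1 hπ10 hπ11 hπ20 hπ21)
  rw [← hBP] at hV1 hV2 hD
  have hgain1 : ∀ a1 s, (((Bπa1 a1 - Bπ) * Dπ) *ᵥ r1) s =
      ∑ a2, π2 s a2 * Q1 (s, a1, a2) - V1 s := by
    intro a1 s
    rw [hD, sub_mul_mulVec_eq_sub_of_bellman hdet _ hV1 (hP ▸ eq_add_smul_of_mulVec hQ1),
      Pi.sub_apply, hBa1, deviation_fst_mulVec_apply]
  have hgain2 : ∀ a2 s, (((Bπa2 a2 - Bπ) * Dπ) *ᵥ r2) s =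
      ∑ a1, π1 s a1 * Q2 (s, a1, a2) - V2 s := by
    intro a2 s
    rw [hD, sub_mul_mulVec_eq_sub_of_bellman hdet _ hV2 (hP ▸ eq_add_smul_of_mulVec hQ2),
      Pi.sub_apply, hBa2, deviation_snd_mulVec_apply]
  simp only [hgain1, hgain2, sub_nonpos]
  exact ⟨fun ⟨h2, h1⟩ => ⟨fun a1 s => h1 s a1, fun a2 s => h2 s a2⟩,
    fun ⟨h1, h2⟩ => ⟨fun s a2 => h2 a2 s, fun s a1 => h1 a1 s⟩⟩
end

section
/- In a two-player finite discounted stochastic game, a bi-policy π is a correlated equilibrium (its per-state joint distribution is a correlated equilibrium of the Q-value game at every state) if and only if for each player i, each state s, each action a_i with positive marginal probability, and each alternative action ǎ_i ≠ a_i: π⃗^T H(s,a_i)^T [H(s,a_i) − H(s,ǎ_i)] D_π r_i ≥ 0, where π⃗ is the bi-policy arranged as a vector of joint probabilities, and H(s,a_i) is the linear operator extracting the slice of a reward vector corresponding to state s and player i's action fixed to a_i. -/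
open Matrix BigOperators

/-!
The matrix `D_π` turns a reward vector into the corresponding `Q`-function:
`D_π r = r + γ P (I - γ G_π)⁻¹ B_π r = r + γ P V`. Since `H(s, a)` only selects the slice of a
vector at state `s` with the player's own action fixed to `a`, the quadratic form
`π⃗ᵀ H(s,a)ᵀ [H(s,a) − H(s,ǎ)] D_π r` is the difference of the `π`-weighted payoffs of obeying
the recommendation `a` and deviating to `ǎ`, so its sign is exactly the correlated-equilibrium
inequality.
-/

namespace Matrix

variable {R m n : Type*} [CommRing R] [Fintype m]

theorem one_add_smul_mul_mul_mulVec [Fintype n] [DecidableEq m] (γ : R) (P : Matrix m n R)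
    (M : Matrix n n R) (B : Matrix n m R) (r : m → R) :
    (1 + γ • (P * M * B)) *ᵥ r = r + γ • P *ᵥ (M *ᵥ (B *ᵥ r)) := by
  rw [add_mulVec, one_mulVec, smul_mulVec, ← mulVec_mulVec, ← mulVec_mulVec]

section Selection

variable [DecidableEq m]

/-- The paper's `H(s, a)` is `selectMatrix fun a' => (s, a, a')`. -/
def selectMatrix (f : n → m) : Matrix n m R :=
  of fun j x => if x = f j then 1 else 0

theorem selectMatrix_mulVec (f : n → m) (v : m → R) : selectMatrix f *ᵥ v = v ∘ f := by
  ext j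
  simp [selectMatrix, mulVec, dotProduct]

theorem vecMul_selectMatrix_transpose (f : n → m) (v : m → R) :
    v ᵥ* (selectMatrix f)ᵀ = v ∘ f := by
  rw [vecMul_transpose, selectMatrix_mulVec]

theorem selectMatrix_deviation_form [Fintype n] (w : m → R) (f g : n → m) (D : Matrix m m R)
    (r : m → R) :
    (w ᵥ* (selectMatrix f)ᵀ) ⬝ᵥ (((selectMatrix f - selectMatrix g : Matrix n m R) * D) *ᵥ r) =
      (w ∘ f) ⬝ᵥ ((D *ᵥ r) ∘ f) - (w ∘ f) ⬝ᵥ ((D *ᵥ r) ∘ g) := by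
  rw [vecMul_selectMatrix_transpose, ← mulVec_mulVec, sub_mulVec, selectMatrix_mulVec,
    selectMatrix_mulVec, dotProduct_sub]

theorem selectMatrix_deviation_form_nonneg_iff [Fintype n] [LinearOrder R] [IsOrderedRing R]
    (w : m → R) (f g : n → m) (D : Matrix m m R) (r : m → R) :
    0 ≤ (w ᵥ* (selectMatrix f)ᵀ) ⬝ᵥ (((selectMatrix f - selectMatrix g : Matrix n m R) * D) *ᵥ r) ↔
      (w ∘ f) ⬝ᵥ ((D *ᵥ r) ∘ g) ≤ (w ∘ f) ⬝ᵥ ((D *ᵥ r) ∘ f) := by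
  rw [selectMatrix_deviation_form, sub_nonneg]

end Selection

end Matrix

theorem stmt8_general {S A1 A2 : Type*} [Fintype S] [Fintype A1] [Fintype A2]
    [DecidableEq S] [DecidableEq A1] [DecidableEq A2]
    (γ : ℝ)
    (p : S × A1 × A2 → S → ℝ)
    (π : S → A1 × A2 → ℝ)
    (r1 r2 : S × A1 × A2 → ℝ)
    (Gπ : Matrix S S ℝ)
    (Bπ : Matrix S (S × A1 × A2) ℝ)
    (vecπ : S × A1 × A2 → ℝ)
    (hvec : vecπ = fun x => π x.1 x.2)
    (H1 : S → A1 → Matrix A2 (S × A1 × A2) ℝ)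
    (hH1 : ∀ s a1, H1 s a1 = Matrix.of fun a2 x => if x = (s, a1, a2) then 1 else 0)
    (H2 : S → A2 → Matrix A1 (S × A1 × A2) ℝ)
    (hH2 : ∀ s a2, H2 s a2 = Matrix.of fun a1 x => if x = (s, a1, a2) then 1 else 0)
    (P : Matrix (S × A1 × A2) S ℝ)
    (hP : P = Matrix.of fun sa s' => p sa s')
    (V1 V2 : S → ℝ)
    (hV1 : V1 = (1 - γ • Gπ)⁻¹ *ᵥ (Bπ *ᵥ r1))
    (hV2 : V2 = (1 - γ • Gπ)⁻¹ *ᵥ (Bπ *ᵥ r2))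
    (Q1 Q2 : S × A1 × A2 → ℝ)
    (hQ1 : ∀ sa, Q1 sa = r1 sa + γ * ∑ s', p sa s' * V1 s')
    (hQ2 : ∀ sa, Q2 sa = r2 sa + γ * ∑ s', p sa s' * V2 s')
    (Dπ : Matrix (S × A1 × A2) (S × A1 × A2) ℝ)
    (hD : Dπ = 1 + γ • (P * (1 - γ • Gπ)⁻¹ * Bπ)) :
    ((∀ s : S, ∀ a1 : A1, (0 < ∑ a2, π s (a1, a2)) → ∀ b1 : A1, b1 ≠ a1 →
        ∑ a2, π s (a1, a2) * Q1 (s, b1, a2) ≤ ∑ a2, π s (a1, a2) * Q1 (s, a1, a2)) ∧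
     (∀ s : S, ∀ a2 : A2, (0 < ∑ a1, π s (a1, a2)) → ∀ b2 : A2, b2 ≠ a2 →
        ∑ a1, π s (a1, a2) * Q2 (s, a1, b2) ≤ ∑ a1, π s (a1, a2) * Q2 (s, a1, a2)))
      ↔
    ((∀ s : S, ∀ a1 : A1, (0 < ∑ a2, π s (a1, a2)) → ∀ b1 : A1, b1 ≠ a1 →
        0 ≤ (vecπ ᵥ* (H1 s a1)ᵀ) ⬝ᵥ (((H1 s a1 - H1 s b1) * Dπ) *ᵥ r1)) ∧
     (∀ s : S, ∀ a2 : A2, (0 < ∑ a1, π s (a1, a2)) → ∀ b2 : A2, b2 ≠ a2 →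
        0 ≤ (vecπ ᵥ* (H2 s a2)ᵀ) ⬝ᵥ (((H2 s a2 - H2 s b2) * Dπ) *ᵥ r2))) := by
  have hQ_eq {r : S × A1 × A2 → ℝ} {V : S → ℝ} {Q : S × A1 × A2 → ℝ}
      (hV : V = (1 - γ • Gπ)⁻¹ *ᵥ (Bπ *ᵥ r))
      (hQ : ∀ sa, Q sa = r sa + γ * ∑ s', p sa s' * V s') : Q = Dπ *ᵥ r := by
    ext sa
    rw [hD, one_add_smul_mul_mul_mulVec, ← hV, hQ, hP]
    rfl
  obtain rfl := hQ_eq hV1 hQ1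
  obtain rfl := hQ_eq hV2 hQ2
  have hH1' : ∀ s a1, H1 s a1 = selectMatrix fun a2 => (s, a1, a2) := hH1
  have hH2' : ∀ s a2, H2 s a2 = selectMatrix fun a1 => (s, a1, a2) := hH2
  subst hvec
  simp only [hH1', hH2', selectMatrix_deviation_form_nonneg_iff]
  rfl

/-- In a two-player finite discounted stochastic game, a
(joint) bi-policy `π` is a correlated equilibrium (its per-state joint
distribution is a correlated equilibrium of the Q-value game at every state)
if and only if for each player `i`, each state `s`, each action `a_i` with
positive marginal probability, and each alternative `ǎ_i ≠ a_i`: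
`π⃗ᵀ H(s,a_i)ᵀ [H(s,a_i) − H(s,ǎ_i)] D_π r_i ≥ 0`. -/
theorem stmt8 {S A1 A2 : Type*} [Fintype S] [Fintype A1] [Fintype A2]
    [DecidableEq S] [DecidableEq A1] [DecidableEq A2]
    (γ : ℝ) (hγ0 : 0 ≤ γ) (hγ1 : γ < 1)
    (p : S × A1 × A2 → S → ℝ)
    (hp0 : ∀ sa s', 0 ≤ p sa s') (hp1 : ∀ sa, ∑ s', p sa s' = 1)
    (π : S → A1 × A2 → ℝ)
    (hπ0 : ∀ s a, 0 ≤ π s a) (hπ1 : ∀ s, ∑ a, π s a = 1)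
    (r1 r2 : S × A1 × A2 → ℝ)
    (Gπ : Matrix S S ℝ)
    (hG : Gπ = Matrix.of fun s s' => ∑ a : A1 × A2, π s a * p (s, a) s')
    (Bπ : Matrix S (S × A1 × A2) ℝ)
    (hB : Bπ = Matrix.of fun s x => if x.1 = s then π s x.2 else 0)
    (vecπ : S × A1 × A2 → ℝ)
    (hvec : vecπ = fun x => π x.1 x.2)
    (H1 : S → A1 → Matrix A2 (S × A1 × A2) ℝ)
    (hH1 : ∀ s a1, H1 s a1 = Matrix.of fun a2 x => if x = (s, a1, a2) then 1 else 0)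
    (H2 : S → A2 → Matrix A1 (S × A1 × A2) ℝ)
    (hH2 : ∀ s a2, H2 s a2 = Matrix.of fun a1 x => if x = (s, a1, a2) then 1 else 0)
    (P : Matrix (S × A1 × A2) S ℝ)
    (hP : P = Matrix.of fun sa s' => p sa s')
    (V1 V2 : S → ℝ)
    (hV1 : V1 = (1 - γ • Gπ)⁻¹ *ᵥ (Bπ *ᵥ r1))
    (hV2 : V2 = (1 - γ • Gπ)⁻¹ *ᵥ (Bπ *ᵥ r2))
    (Q1 Q2 : S × A1 × A2 → ℝ)
    (hQ1 : ∀ sa, Q1 sa = r1 sa + γ * ∑ s', p sa s' * V1 s')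
    (hQ2 : ∀ sa, Q2 sa = r2 sa + γ * ∑ s', p sa s' * V2 s')
    (Dπ : Matrix (S × A1 × A2) (S × A1 × A2) ℝ)
    (hD : Dπ = 1 + γ • (P * (1 - γ • Gπ)⁻¹ * Bπ)) :
    ((∀ s : S, ∀ a1 : A1, (0 < ∑ a2, π s (a1, a2)) → ∀ b1 : A1, b1 ≠ a1 →
        ∑ a2, π s (a1, a2) * Q1 (s, b1, a2) ≤ ∑ a2, π s (a1, a2) * Q1 (s, a1, a2)) ∧
     (∀ s : S, ∀ a2 : A2, (0 < ∑ a1, π s (a1, a2)) → ∀ b2 : A2, b2 ≠ a2 →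
        ∑ a1, π s (a1, a2) * Q2 (s, a1, b2) ≤ ∑ a1, π s (a1, a2) * Q2 (s, a1, a2)))
      ↔
    ((∀ s : S, ∀ a1 : A1, (0 < ∑ a2, π s (a1, a2)) → ∀ b1 : A1, b1 ≠ a1 →
        0 ≤ (vecπ ᵥ* (H1 s a1)ᵀ) ⬝ᵥ (((H1 s a1 - H1 s b1) * Dπ) *ᵥ r1)) ∧
     (∀ s : S, ∀ a2 : A2, (0 < ∑ a1, π s (a1, a2)) → ∀ b2 : A2, b2 ≠ a2 →
        0 ≤ (vecπ ᵥ* (H2 s a2)ᵀ) ⬝ᵥ (((H2 s a2 - H2 s b2) * Dπ) *ᵥ r2))) :=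
  stmt8_general γ p π r1 r2 Gπ Bπ vecπ hvec H1 hH1 H2 hH2 P hP V1 V2 hV1 hV2 Q1 Q2 hQ1 hQ2 Dπ hD
end

section
/- In a finite two-player game, if an adversarial equilibrium exists — a mixed profile (π_1, π_2) that is a Nash equilibrium and additionally satisfies E_{π}[R_i] ≤ E[R_i(π_i, a_{−i})] for each player i and every pure action a_{−i} of the opponent — then the equilibrium payoff of each player equals their maximin value: E_π[R_i] = max_{σ_i} min_{a_{−i}} E[R_i(σ_i, a_{−i})]. Consequently all adversarial equilibria yield the same payoff vector. -/
open BigOperators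

noncomputable section

variable {A1 A2 : Type*} [Fintype A1] [Fintype A2]

/-- Expected payoff of a payoff function `R` under the mixed profile `(π1, π2)`. -/
def expPay (R : A1 → A2 → ℝ) (π1 : A1 → ℝ) (π2 : A2 → ℝ) : ℝ :=
  ∑ a1, ∑ a2, π1 a1 * π2 a2 * R a1 a2

/-- `σ` is a mixed strategy. -/
def IsMixed {A : Type*} [Fintype A] (σ : A → ℝ) : Prop :=
  (∀ a, 0 ≤ σ a) ∧ ∑ a, σ a = 1

/-- Adversarial equilibrium: a Nash equilibrium at which additionally each
player's expected payoff is a lower bound over all pure opponent deviations. -/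
def IsAdvE (R1 R2 : A1 → A2 → ℝ) (π1 : A1 → ℝ) (π2 : A2 → ℝ) : Prop :=
  IsMixed π1 ∧ IsMixed π2 ∧
  (∀ σ1 : A1 → ℝ, IsMixed σ1 → expPay R1 σ1 π2 ≤ expPay R1 π1 π2) ∧
  (∀ σ2 : A2 → ℝ, IsMixed σ2 → expPay R2 π1 σ2 ≤ expPay R2 π1 π2) ∧
  (∀ a2 : A2, expPay R1 π1 π2 ≤ ∑ a1, π1 a1 * R1 a1 a2) ∧
  (∀ a1 : A1, expPay R2 π1 π2 ≤ ∑ a2, π2 a2 * R2 a1 a2)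

/-- The set of values player 1 can guarantee: worst-case (over pure opponent
actions) expected payoffs of mixed strategies `σ1`. -/
def guarantee1 [Nonempty A2] (R1 : A1 → A2 → ℝ) : Set ℝ :=
  {x | ∃ σ1 : A1 → ℝ, IsMixed σ1 ∧
    x = Finset.univ.inf' Finset.univ_nonempty (fun a2 => ∑ a1, σ1 a1 * R1 a1 a2)}

def guarantee2 [Nonempty A1] (R2 : A1 → A2 → ℝ) : Set ℝ :=
  {x | ∃ σ2 : A2 → ℝ, IsMixed σ2 ∧
    x = Finset.univ.inf' Finset.univ_nonempty (fun a1 => ∑ a2, σ2 a2 * R2 a1 a2)}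

/-! Let `v` be an adversarial-equilibrium payoff of player 1. A mixed strategy guarantees at most
what it earns against the opponent's equilibrium strategy `π2` (a convex combination of pure
actions), which by the Nash property is at most `v`; and `π1` guarantees exactly `v` by the
adversarial property. So `v` is the maximin value, and player 2 is player 1 of the transposed
game. -/

open Function

theorem IsMixed.inf'_le_sum_mul {ι : Type*} [Fintype ι] [Nonempty ι] {ρ : ι → ℝ}
    (hρ : IsMixed ρ) (f : ι → ℝ) :
    Finset.univ.inf' Finset.univ_nonempty f ≤ ∑ i, ρ i * f i :=
  calc Finset.univ.inf' Finset.univ_nonempty f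
      = ∑ i, ρ i * Finset.univ.inf' Finset.univ_nonempty f := by
        rw [← Finset.sum_mul, hρ.2, one_mul]
    _ ≤ ∑ i, ρ i * f i := Finset.sum_le_sum fun i _ =>
        mul_le_mul_of_nonneg_left (Finset.inf'_le f (Finset.mem_univ i)) (hρ.1 i)

theorem expPay_eq_sum_mul_sum (R : A1 → A2 → ℝ) (σ1 : A1 → ℝ) (π2 : A2 → ℝ) :
    expPay R σ1 π2 = ∑ a2, π2 a2 * ∑ a1, σ1 a1 * R a1 a2 := by
  rw [expPay, Finset.sum_comm]
  simp only [Finset.mul_sum]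
  exact Finset.sum_congr rfl fun _ _ => Finset.sum_congr rfl fun _ _ => by ring

theorem expPay_swap (R : A1 → A2 → ℝ) (π1 : A1 → ℝ) (π2 : A2 → ℝ) :
    expPay (swap R) π2 π1 = expPay R π1 π2 := by
  rw [expPay, expPay, Finset.sum_comm]
  exact Finset.sum_congr rfl fun _ _ => Finset.sum_congr rfl fun _ _ => by
    rw [swap, mul_comm (π2 _)]

theorem IsMixed.inf'_le_expPay [Nonempty A2] {π2 : A2 → ℝ} (hπ2 : IsMixed π2)
    (R : A1 → A2 → ℝ) (σ1 : A1 → ℝ) :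
    Finset.univ.inf' Finset.univ_nonempty (fun a2 => ∑ a1, σ1 a1 * R a1 a2) ≤ expPay R σ1 π2 :=
  (expPay_eq_sum_mul_sum R σ1 π2).symm ▸ hπ2.inf'_le_sum_mul _

theorem isGreatest_guarantee1 [Nonempty A2] {R : A1 → A2 → ℝ} {π1 : A1 → ℝ} {π2 : A2 → ℝ}
    (hπ1 : IsMixed π1) (hπ2 : IsMixed π2)
    (hbest : ∀ σ1 : A1 → ℝ, IsMixed σ1 → expPay R σ1 π2 ≤ expPay R π1 π2)
    (hsecure : ∀ a2 : A2, expPay R π1 π2 ≤ ∑ a1, π1 a1 * R a1 a2) :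
    IsGreatest (guarantee1 R) (expPay R π1 π2) := by
  refine ⟨⟨π1, hπ1, le_antisymm ?_ (hπ2.inf'_le_expPay R π1)⟩, ?_⟩
  · exact Finset.le_inf' _ _ fun a2 _ => hsecure a2
  · rintro x ⟨σ1, hσ1, rfl⟩
    exact (hπ2.inf'_le_expPay R σ1).trans (hbest σ1 hσ1)

theorem IsAdvE.isGreatest_guarantee1 [Nonempty A2] {R1 R2 : A1 → A2 → ℝ} {π1 : A1 → ℝ}
    {π2 : A2 → ℝ} (h : IsAdvE R1 R2 π1 π2) :
    IsGreatest (guarantee1 R1) (expPay R1 π1 π2) :=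
  _root_.isGreatest_guarantee1 h.1 h.2.1 h.2.2.1 h.2.2.2.2.1

theorem IsAdvE.isGreatest_guarantee2 [Nonempty A1] {R1 R2 : A1 → A2 → ℝ} {π1 : A1 → ℝ}
    {π2 : A2 → ℝ} (h : IsAdvE R1 R2 π1 π2) :
    IsGreatest (guarantee2 R2) (expPay R2 π1 π2) := by
  obtain ⟨hπ1, hπ2, -, hbest, -, hsecure⟩ := h
  rw [← expPay_swap]
  exact _root_.isGreatest_guarantee1 hπ2 hπ1 (by simpa only [expPay_swap] using hbest)
    (by simpa only [expPay_swap] using hsecure)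

/-- If an adversarial equilibrium exists in a finite
two-player game, then the equilibrium payoff of each player equals (is the
greatest element of the guaranteeable values, i.e. the maximin value of) their
maximin value; consequently all adversarial equilibria yield the same payoff
vector. -/
theorem stmt15 [Nonempty A1] [Nonempty A2]
    (R1 R2 : A1 → A2 → ℝ)
    (π1 : A1 → ℝ) (π2 : A2 → ℝ) (h : IsAdvE R1 R2 π1 π2) :
    (IsGreatest (guarantee1 R1) (expPay R1 π1 π2) ∧
     IsGreatest (guarantee2 R2) (expPay R2 π1 π2)) ∧
    (∀ ρ1 : A1 → ℝ, ∀ ρ2 : A2 → ℝ, IsAdvE R1 R2 ρ1 ρ2 →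
      expPay R1 ρ1 ρ2 = expPay R1 π1 π2 ∧ expPay R2 ρ1 ρ2 = expPay R2 π1 π2) :=
  ⟨⟨h.isGreatest_guarantee1, h.isGreatest_guarantee2⟩, fun _ _ hρ =>
    ⟨hρ.isGreatest_guarantee1.unique h.isGreatest_guarantee1,
      hρ.isGreatest_guarantee2.unique h.isGreatest_guarantee2⟩⟩
end
end
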